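/- arXiv:2307.01975 — 2 statements merged into one kernel-verified Lean document; each statement's English description precedes it below -/
import Mathlib

section
/- Let f : ℝ → ℝ be continuously differentiable with |f'(v)| ≤ C₂(1 + |v|^{γ−1}) for C₂ > 0, γ ≥ 2. Let D = (0,1) ⊂ ℝ and v ∈ H¹₀(D). Then the composition f∘v satisfies ‖∇(f∘v)‖_{L²(D)} ≤ C (1 + ‖v‖_{H¹}^γ) for a constant C depending only on C₂, γ, and the Sobolev embedding constant of H¹₀(0,1) into C([0,1]). -/
open MeasureTheory

theorem stmt_11 (C₂ γ Cs : ℝ) (hC₂ : 0 < C₂) (hγ : 2 ≤ γ) (hCs : 0 < Cs) :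
    ∃ C > 0, ∀ f v : ℝ → ℝ, ContDiff ℝ 1 f → ContDiff ℝ 1 v →
      (∀ x : ℝ, |deriv f x| ≤ C₂ * (1 + |x| ^ (γ - 1))) →
      (∀ x ∈ Set.Icc (0 : ℝ) 1,
        |v x| ≤ Cs * Real.sqrt (∫ y in Set.Ioo (0 : ℝ) 1,
          (v y) ^ 2 + (deriv v y) ^ 2)) →
      Real.sqrt (∫ x in Set.Ioo (0 : ℝ) 1, (deriv (f ∘ v) x) ^ 2) ≤
        C * (1 + Real.sqrt (∫ y in Set.Ioo (0 : ℝ) 1,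
          (v y) ^ 2 + (deriv v y) ^ 2) ^ γ) := by
  set M : ℝ := max 1 (Cs ^ (γ - 1)) with hM
  have hM1 : (1:ℝ) ≤ M := le_max_left _ _
  have hM0 : 0 < M := lt_of_lt_of_le one_pos hM1
  refine ⟨2 * C₂ * M, by positivity, ?_⟩
  intro f v hf hv hdf hsob
  set I : ℝ := ∫ y in Set.Ioo (0:ℝ) 1, (v y) ^ 2 + (deriv v y) ^ 2 with hI
  set N : ℝ := Real.sqrt I with hN
  have hN0 : 0 ≤ N := Real.sqrt_nonneg _
  set K : ℝ := C₂ * (1 + (Cs * N) ^ (γ - 1)) with hK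
  have hK0 : 0 ≤ K := by
    have : 0 ≤ (Cs * N) ^ (γ - 1) := Real.rpow_nonneg (by positivity) _
    positivity
  -- continuity facts
  have hvc : Continuous v := hv.continuous
  have hv'c : Continuous (deriv v) := hv.continuous_deriv le_rfl
  have hfv : ContDiff ℝ 1 (f ∘ v) := hf.comp hv
  have hfv'c : Continuous (deriv (f ∘ v)) := hfv.continuous_deriv le_rfl
  -- integrability
  have hint1 : IntegrableOn (fun y => (v y) ^ 2 + (deriv v y) ^ 2) (Set.Ioo (0:ℝ) 1) :=
    (((hvc.pow 2).add (hv'c.pow 2)).integrableOn_Icc).mono_set Set.Ioo_subset_Icc_self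
  have hint2 : IntegrableOn (fun y => (deriv v y) ^ 2) (Set.Ioo (0:ℝ) 1) :=
    ((hv'c.pow 2).integrableOn_Icc).mono_set Set.Ioo_subset_Icc_self
  have hint3 : IntegrableOn (fun x => (deriv (f ∘ v) x) ^ 2) (Set.Ioo (0:ℝ) 1) :=
    ((hfv'c.pow 2).integrableOn_Icc).mono_set Set.Ioo_subset_Icc_self
  -- ∫ v'^2 ≤ I
  have hII : (∫ y in Set.Ioo (0:ℝ) 1, (deriv v y) ^ 2) ≤ I := by
    rw [hI]
    refine setIntegral_mono_on hint2 hint1 measurableSet_Ioo ?_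
    intro x _
    nlinarith [sq_nonneg (v x)]
  have hIv0 : 0 ≤ ∫ y in Set.Ioo (0:ℝ) 1, (deriv v y) ^ 2 :=
    setIntegral_nonneg measurableSet_Ioo (fun x _ => sq_nonneg _)
  -- pointwise bound
  have hpt : ∀ x ∈ Set.Ioo (0:ℝ) 1,
      (deriv (f ∘ v) x) ^ 2 ≤ K ^ 2 * (deriv v x) ^ 2 := by
    intro x hx
    have hdc : deriv (f ∘ v) x = deriv f (v x) * deriv v x :=
      deriv_comp x (hf.differentiable one_ne_zero _) (hv.differentiable one_ne_zero _)
    have hvx : |v x| ≤ Cs * N := hsob x (Set.Ioo_subset_Icc_self hx)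
    have hrp : |v x| ^ (γ - 1) ≤ (Cs * N) ^ (γ - 1) :=
      Real.rpow_le_rpow (abs_nonneg _) hvx (by linarith)
    have hfb : |deriv f (v x)| ≤ K := le_trans (hdf (v x)) (by
      rw [hK]; nlinarith)
    rw [hdc, mul_pow]
    have h1 : (deriv f (v x)) ^ 2 ≤ K ^ 2 := by
      rw [← sq_abs]
      exact pow_le_pow_left₀ (abs_nonneg _) hfb 2
    nlinarith [sq_nonneg (deriv v x)]
  -- integral bound
  have hintK : IntegrableOn (fun x => K ^ 2 * (deriv v x) ^ 2) (Set.Ioo (0:ℝ) 1) :=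
    hint2.const_mul _
  have hmain : (∫ x in Set.Ioo (0:ℝ) 1, (deriv (f ∘ v) x) ^ 2) ≤ K ^ 2 * I := by
    calc (∫ x in Set.Ioo (0:ℝ) 1, (deriv (f ∘ v) x) ^ 2)
        ≤ ∫ x in Set.Ioo (0:ℝ) 1, K ^ 2 * (deriv v x) ^ 2 :=
          setIntegral_mono_on hint3 hintK measurableSet_Ioo hpt
      _ = K ^ 2 * ∫ x in Set.Ioo (0:ℝ) 1, (deriv v x) ^ 2 := integral_const_mul _ _
      _ ≤ K ^ 2 * I := by nlinarith [sq_nonneg K]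
  have hsqrt : Real.sqrt (∫ x in Set.Ioo (0:ℝ) 1, (deriv (f ∘ v) x) ^ 2) ≤ K * N := by
    calc Real.sqrt (∫ x in Set.Ioo (0:ℝ) 1, (deriv (f ∘ v) x) ^ 2)
        ≤ Real.sqrt (K ^ 2 * I) := Real.sqrt_le_sqrt hmain
      _ = Real.sqrt (K ^ 2) * Real.sqrt I := Real.sqrt_mul (sq_nonneg _) _
      _ = K * N := by rw [Real.sqrt_sq hK0, hN]
  refine hsqrt.trans ?_
  -- final: K * N ≤ 2 * C₂ * M * (1 + N ^ γ)
  have hNγ0 : 0 ≤ N ^ γ := Real.rpow_nonneg hN0 _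
  rcases eq_or_lt_of_le hN0 with h0 | hNpos
  · rw [← h0, mul_zero]
    positivity
  · have hsplit : (Cs * N) ^ (γ - 1) = Cs ^ (γ - 1) * N ^ (γ - 1) :=
      Real.mul_rpow hCs.le hN0
    have hNγ : N ^ (γ - 1) * N = N ^ γ := by
      have h := Real.rpow_add_one hNpos.ne' (γ - 1)
      rw [sub_add_cancel] at h
      exact h.symm
    have hNle : N ≤ 1 + N ^ γ := by
      rcases le_or_gt N 1 with h | h
      · linarith
      · have : N ^ (1:ℝ) ≤ N ^ γ :=
          Real.rpow_le_rpow_of_exponent_le h.le (by linarith)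
        rw [Real.rpow_one] at this
        linarith
    have hCsM : Cs ^ (γ - 1) ≤ M := le_max_right _ _
    have hKN : K * N = C₂ * N + C₂ * Cs ^ (γ - 1) * N ^ γ := by
      rw [hK, hsplit, ← hNγ]; ring
    rw [hKN]
    have h1 : C₂ * N ≤ C₂ * (1 + N ^ γ) := mul_le_mul_of_nonneg_left hNle hC₂.le
    have h2 : C₂ * (1 + N ^ γ) * 1 ≤ C₂ * (1 + N ^ γ) * M :=
      mul_le_mul_of_nonneg_left hM1 (by positivity)
    have h3 : C₂ * (Cs ^ (γ - 1) * N ^ γ) ≤ C₂ * (M * N ^ γ) :=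
      mul_le_mul_of_nonneg_left (mul_le_mul_of_nonneg_right hCsM hNγ0) hC₂.le
    have h4 : C₂ * M * N ^ γ ≤ C₂ * M * (1 + N ^ γ) :=
      mul_le_mul_of_nonneg_left (by linarith) (by positivity)
    nlinarith
end

section
/- For λ ≥ 1, γ ∈ [0,1], t ≥ s ≥ 0, and (a,b) ∈ ℝ² with weighted norm ‖(a,b)‖_γ² := λ^γ a² + λ^{γ−1} b², the difference of wave propagator matrices satisfies ‖(E(t) − E(s))(a,b)‖₀ ≤ C (t−s)^γ ‖(a,b)‖_γ, where E(r) = [[cos(r√λ), λ^{−1/2}sin(r√λ)], [−λ^{1/2}sin(r√λ), cos(r√λ)]], ‖(a,b)‖₀² = a² + λ^{−1}b², and C is an absolute constant (e.g. C = 4). -/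
lemma stmt19_sin_lip (X Y : ℝ) : |Real.sin X - Real.sin Y| ≤ |X - Y| := by
  rw [Real.sin_sub_sin]
  have h1 : |Real.sin ((X - Y) / 2)| ≤ |(X - Y) / 2| := Real.abs_sin_le_abs
  have h2 : |Real.cos ((X + Y) / 2)| ≤ 1 := Real.abs_cos_le_one _
  calc |2 * Real.sin ((X - Y) / 2) * Real.cos ((X + Y) / 2)|
      = 2 * |Real.sin ((X - Y) / 2)| * |Real.cos ((X + Y) / 2)| := by
        rw [abs_mul, abs_mul, abs_two]
    _ ≤ 2 * |(X - Y) / 2| * 1 :=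
        mul_le_mul (mul_le_mul_of_nonneg_left h1 (by norm_num)) h2 (abs_nonneg _)
          (by positivity)
    _ = |X - Y| := by rw [mul_one, abs_div, abs_two]; ring

lemma stmt19_cos_lip (X Y : ℝ) : |Real.cos X - Real.cos Y| ≤ |X - Y| := by
  rw [Real.cos_sub_cos]
  have h1 : |Real.sin ((X - Y) / 2)| ≤ |(X - Y) / 2| := Real.abs_sin_le_abs
  have h2 : |Real.sin ((X + Y) / 2)| ≤ 1 := Real.abs_sin_le_one _
  calc |-2 * Real.sin ((X + Y) / 2) * Real.sin ((X - Y) / 2)|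
      = 2 * |Real.sin ((X + Y) / 2)| * |Real.sin ((X - Y) / 2)| := by
        rw [abs_mul, abs_mul, abs_neg, abs_two]
    _ ≤ 2 * 1 * |(X - Y) / 2| :=
        mul_le_mul (mul_le_mul_of_nonneg_left h2 (by norm_num)) h1 (abs_nonneg _)
          (by positivity)
    _ = |X - Y| := by rw [abs_div, abs_two]; ring

theorem stmt_19 (lam γ t s a b : ℝ) (hlam : 1 ≤ lam) (hγ0 : 0 ≤ γ)
    (hγ1 : γ ≤ 1) (hs : 0 ≤ s) (hst : s ≤ t) :
    Real.sqrt
        (((Real.cos (t * Real.sqrt lam) - Real.cos (s * Real.sqrt lam)) * a +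
            (Real.sqrt lam)⁻¹ *
              (Real.sin (t * Real.sqrt lam) - Real.sin (s * Real.sqrt lam)) * b) ^ 2 +
          lam⁻¹ *
            (-(Real.sqrt lam) *
                (Real.sin (t * Real.sqrt lam) - Real.sin (s * Real.sqrt lam)) * a +
              (Real.cos (t * Real.sqrt lam) - Real.cos (s * Real.sqrt lam)) * b) ^ 2) ≤
      4 * (t - s) ^ γ *
        Real.sqrt (lam ^ γ * a ^ 2 + lam ^ (γ - 1) * b ^ 2) := by
  have hlam0 : (0:ℝ) < lam := lt_of_lt_of_le one_pos hlam
  set r := Real.sqrt lam with hrdef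
  have hr1 : (1:ℝ) ≤ r := by
    rw [hrdef, show (1:ℝ) = Real.sqrt 1 by simp]
    exact Real.sqrt_le_sqrt hlam
  have hr0 : (0:ℝ) < r := lt_of_lt_of_le one_pos hr1
  have hr2 : r ^ 2 = lam := Real.sq_sqrt hlam0.le
  set Dc := Real.cos (t * r) - Real.cos (s * r) with hDc
  set Ds := Real.sin (t * r) - Real.sin (s * r) with hDs
  have h0 : 0 ≤ t - s := sub_nonneg.2 hst
  -- scalar bound
  have key : ∀ d : ℝ, |d| ≤ 2 → |d| ≤ (t - s) * r →
      d ^ 2 ≤ 4 * ((t - s) ^ γ * r ^ γ) ^ 2 := by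
    intro d h2 hx
    have hxnn : 0 ≤ (t - s) * r := mul_nonneg h0 hr0.le
    rcases eq_or_lt_of_le hxnn with h0x | h0x
    · have hd0 : d = 0 := abs_nonpos_iff.mp (by rw [← h0x] at hx; exact hx)
      rw [hd0]
      have : (0:ℝ) ≤ 4 * ((t - s) ^ γ * r ^ γ) ^ 2 := by positivity
      linarith [this]
    · have hmin : |d| ≤ 2 * ((t - s) * r) ^ γ := by
        rcases le_or_gt ((t - s) * r) 1 with hle | hgt
        · have h1 : (t - s) * r ≤ ((t - s) * r) ^ γ := by
            have := Real.rpow_le_rpow_of_exponent_ge h0x hle hγ1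
            rwa [Real.rpow_one] at this
          have hp : 0 ≤ ((t - s) * r) ^ γ := Real.rpow_nonneg hxnn γ
          linarith [hx]
        · have h1 : (1:ℝ) ≤ ((t - s) * r) ^ γ := Real.one_le_rpow hgt.le hγ0
          linarith [h2]
      have hsq : d ^ 2 ≤ (2 * ((t - s) * r) ^ γ) ^ 2 := by
        rw [← sq_abs d]
        exact pow_le_pow_left₀ (abs_nonneg d) hmin 2
      have hmul : ((t - s) * r) ^ γ = (t - s) ^ γ * r ^ γ :=
        Real.mul_rpow h0 hr0.le
      calc d ^ 2 ≤ (2 * ((t - s) * r) ^ γ) ^ 2 := hsq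
        _ = 4 * ((t - s) ^ γ * r ^ γ) ^ 2 := by rw [hmul]; ring
  -- bounds on Dc, Ds
  have habsdiff : |t * r - s * r| = (t - s) * r := by
    rw [← sub_mul, abs_of_nonneg (mul_nonneg h0 hr0.le)]
  have hDcb : Dc ^ 2 ≤ 4 * ((t - s) ^ γ * r ^ γ) ^ 2 := by
    apply key
    · rw [hDc]
      have h1 := Real.neg_one_le_cos (t * r)
      have h2 := Real.cos_le_one (t * r)
      have h3 := Real.neg_one_le_cos (s * r)
      have h4 := Real.cos_le_one (s * r)
      rw [abs_le]; constructor <;> linarith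
    · have := stmt19_cos_lip (t * r) (s * r)
      rwa [habsdiff] at this
  have hDsb : Ds ^ 2 ≤ 4 * ((t - s) ^ γ * r ^ γ) ^ 2 := by
    apply key
    · rw [hDs]
      have h1 := Real.neg_one_le_sin (t * r)
      have h2 := Real.sin_le_one (t * r)
      have h3 := Real.neg_one_le_sin (s * r)
      have h4 := Real.sin_le_one (s * r)
      rw [abs_le]; constructor <;> linarith
    · have := stmt19_sin_lip (t * r) (s * r)
      rwa [habsdiff] at this
  -- exact factorization of left-hand side
  have hid : (Dc * a + r⁻¹ * Ds * b) ^ 2 + lam⁻¹ * (-r * Ds * a + Dc * b) ^ 2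
      = (Dc ^ 2 + Ds ^ 2) * (a ^ 2 + lam⁻¹ * b ^ 2) := by
    have h2 : r ≠ 0 := hr0.ne'
    rw [show lam = r ^ 2 from hr2.symm]
    field_simp
    ring
  -- (r^γ)^2 = lam^γ
  have hrγ : (r ^ γ) ^ 2 = lam ^ γ := by
    rw [← hr2, ← Real.rpow_natCast (r ^ γ) 2, ← Real.rpow_natCast r 2,
      ← Real.rpow_mul hr0.le, ← Real.rpow_mul hr0.le, mul_comm]
  -- lam^(γ-1) = lam^γ * lam⁻¹
  have hγ1' : lam ^ (γ - 1) = lam ^ γ * lam⁻¹ := by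
    rw [Real.rpow_sub hlam0, Real.rpow_one, div_eq_mul_inv]
  have hmain : (Dc * a + r⁻¹ * Ds * b) ^ 2 + lam⁻¹ * (-r * Ds * a + Dc * b) ^ 2
      ≤ (4 * (t - s) ^ γ) ^ 2 * (lam ^ γ * a ^ 2 + lam ^ (γ - 1) * b ^ 2) := by
    rw [hid]
    have hD : Dc ^ 2 + Ds ^ 2 ≤ 8 * ((t - s) ^ γ * r ^ γ) ^ 2 := by linarith
    have hann : 0 ≤ a ^ 2 + lam⁻¹ * b ^ 2 := by positivity
    calc (Dc ^ 2 + Ds ^ 2) * (a ^ 2 + lam⁻¹ * b ^ 2)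
        ≤ 8 * ((t - s) ^ γ * r ^ γ) ^ 2 * (a ^ 2 + lam⁻¹ * b ^ 2) :=
          mul_le_mul_of_nonneg_right hD hann
      _ = 8 * ((t - s) ^ γ) ^ 2 * (lam ^ γ * a ^ 2 + lam ^ γ * lam⁻¹ * b ^ 2) := by
          rw [mul_pow, ← hrγ]; ring
      _ ≤ 16 * ((t - s) ^ γ) ^ 2 * (lam ^ γ * a ^ 2 + lam ^ γ * lam⁻¹ * b ^ 2) := by
          have hq : 0 ≤ ((t - s) ^ γ) ^ 2 * (lam ^ γ * a ^ 2 + lam ^ γ * lam⁻¹ * b ^ 2) := by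
            positivity
          nlinarith [hq]
      _ = (4 * (t - s) ^ γ) ^ 2 * (lam ^ γ * a ^ 2 + lam ^ (γ - 1) * b ^ 2) := by
          rw [hγ1']; ring
  calc Real.sqrt ((Dc * a + r⁻¹ * Ds * b) ^ 2 + lam⁻¹ * (-r * Ds * a + Dc * b) ^ 2)
      ≤ Real.sqrt ((4 * (t - s) ^ γ) ^ 2 * (lam ^ γ * a ^ 2 + lam ^ (γ - 1) * b ^ 2)) :=
        Real.sqrt_le_sqrt hmain
    _ = 4 * (t - s) ^ γ * Real.sqrt (lam ^ γ * a ^ 2 + lam ^ (γ - 1) * b ^ 2) := by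
        rw [Real.sqrt_mul (sq_nonneg _), Real.sqrt_sq (by positivity)]
end
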